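/- arXiv:1506.03514 — 10 statements merged into one kernel-verified Lean document; each statement's English description precedes it below -/
import Mathlib

section
/- Let A₁,…,A_k be n×n real 0-1 matrices with A₁+⋯+A_k = J (the all-ones matrix). Then for all real values x₁,…,x_k the matrix A = Σᵢ xᵢAᵢ is normal (AAᵀ = AᵀA) if and only if each Aᵢ is normal and AᵢAⱼᵀ + AⱼAᵢᵀ = AᵢᵀAⱼ + AⱼᵀAᵢ for all 1 ≤ i < j ≤ k. -/
open Matrix

private lemma expand_aux {n k : ℕ} (x : Fin k → ℝ)
    (M N : Fin k → Matrix (Fin n) (Fin n) ℝ) :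
    (∑ i, x i • M i) * (∑ i, x i • N i)
      = ∑ i, ∑ j, (x i * x j) • (M i * N j) := by
  rw [Finset.sum_mul_sum]
  refine Finset.sum_congr rfl fun i _ => Finset.sum_congr rfl fun j _ => ?_
  rw [smul_mul_smul_comm]

private lemma dbl_aux {n k : ℕ} (x : Fin k → ℝ)
    (C : Fin k → Fin k → Matrix (Fin n) (Fin n) ℝ) :
    (∑ i, ∑ j, (x i * x j) • C i j) + (∑ i, ∑ j, (x i * x j) • C i j)
      = ∑ i, ∑ j, (x i * x j) • (C i j + C j i) := by
  nth_rewrite 2 [Finset.sum_comm]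
  rw [← Finset.sum_add_distrib]
  refine Finset.sum_congr rfl fun i _ => ?_
  rw [← Finset.sum_add_distrib]
  refine Finset.sum_congr rfl fun j _ => ?_
  rw [mul_comm (x j), smul_add]

theorem stmt0 (n k : ℕ) (A : Fin k → Matrix (Fin n) (Fin n) ℝ)
    (h01 : ∀ i a b, A i a b = 0 ∨ A i a b = 1)
    (hsum : ∑ i, A i = fun _ _ => (1 : ℝ)) :
    (∀ x : Fin k → ℝ,
        (∑ i, x i • A i) * (∑ i, x i • A i)ᵀ = (∑ i, x i • A i)ᵀ * (∑ i, x i • A i)) ↔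
      ((∀ i, A i * (A i)ᵀ = (A i)ᵀ * A i) ∧
        ∀ i j : Fin k, i < j →
          A i * (A j)ᵀ + A j * (A i)ᵀ = (A i)ᵀ * A j + (A j)ᵀ * A i) := by
  constructor
  · intro hx
    have hsingle : ∀ i : Fin k, A i * (A i)ᵀ = (A i)ᵀ * A i := by
      intro i
      have h := hx (Pi.single i (1:ℝ))
      have hs : ∑ t, (Pi.single i 1 : Fin k → ℝ) t • A t = A i := by
        simp [Pi.single_apply, ite_smul]
      rwa [hs] at h
    refine ⟨hsingle, ?_⟩
    intro i j hij
    have hne : j ≠ i := hij.ne'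
    have h := hx ((Pi.single i 1 + Pi.single j 1 : Fin k → ℝ))
    have hs : ∑ t, (Pi.single i 1 + Pi.single j 1 : Fin k → ℝ) t • A t = A i + A j := by
      simp [Pi.single_apply, add_smul, ite_smul, Finset.sum_add_distrib, hne]
    rw [hs] at h
    simp only [transpose_add, add_mul, mul_add] at h
    rw [hsingle i, hsingle j] at h
    -- h : AiᵀAi + AiAjᵀ + (AjAiᵀ + AjᵀAj) = ...
    have h2 : (A i)ᵀ * A i + (A i * (A j)ᵀ + A j * (A i)ᵀ) + (A j)ᵀ * A j
        = (A i)ᵀ * A i + ((A i)ᵀ * A j + (A j)ᵀ * A i) + (A j)ᵀ * A j := by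
      calc (A i)ᵀ * A i + (A i * (A j)ᵀ + A j * (A i)ᵀ) + (A j)ᵀ * A j
          = (A i)ᵀ * A i + A j * (A i)ᵀ + (A i * (A j)ᵀ + (A j)ᵀ * A j) := by abel
        _ = (A i)ᵀ * A i + (A j)ᵀ * A i + ((A i)ᵀ * A j + (A j)ᵀ * A j) := h
        _ = (A i)ᵀ * A i + ((A i)ᵀ * A j + (A j)ᵀ * A i) + (A j)ᵀ * A j := by abel
    exact add_left_cancel (add_right_cancel h2)
  · rintro ⟨hn, hp⟩ x
    have hall : ∀ i j, A i * (A j)ᵀ + A j * (A i)ᵀ = (A i)ᵀ * A j + (A j)ᵀ * A i := by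
      intro i j
      rcases lt_trichotomy i j with h | h | h
      · exact hp i j h
      · subst h; rw [hn i]
      · rw [add_comm, hp j i h, add_comm]
    have e1 : (∑ i, x i • A i) * (∑ i, x i • A i)ᵀ
        = ∑ i, ∑ j, (x i * x j) • (A i * (A j)ᵀ) := by
      rw [transpose_sum]
      simp only [transpose_smul]
      exact expand_aux x A (fun j => (A j)ᵀ)
    have e2 : (∑ i, x i • A i)ᵀ * (∑ i, x i • A i)
        = ∑ i, ∑ j, (x i * x j) • ((A i)ᵀ * A j) := by
      rw [transpose_sum]
      simp only [transpose_smul]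
      exact expand_aux x (fun j => (A j)ᵀ) A
    rw [e1, e2]
    have key : (∑ i, ∑ j, (x i * x j) • (A i * (A j)ᵀ))
          + (∑ i, ∑ j, (x i * x j) • (A i * (A j)ᵀ))
        = (∑ i, ∑ j, (x i * x j) • ((A i)ᵀ * A j))
          + (∑ i, ∑ j, (x i * x j) • ((A i)ᵀ * A j)) := by
      rw [dbl_aux x (fun i j => A i * (A j)ᵀ), dbl_aux x (fun i j => (A i)ᵀ * A j)]
      exact Finset.sum_congr rfl fun i _ => Finset.sum_congr rfl fun j _ => by
        rw [hall i j]
    have h2 : (2 : ℝ) • (∑ i, ∑ j, (x i * x j) • (A i * (A j)ᵀ))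
        = (2 : ℝ) • (∑ i, ∑ j, (x i * x j) • ((A i)ᵀ * A j)) := by
      rw [two_smul, two_smul]; exact key
    exact smul_right_injective _ (two_ne_zero) h2
end

section
/- Let A₁,…,A_k be n×n real 0-1 matrices with A₁+⋯+A_k = J. If Σᵢ xᵢAᵢ is normal for all choices x₁,…,x_k ∈ {0,1}, then Σᵢ xᵢAᵢ is normal for all real x₁,…,x_k. -/
open Matrix

theorem stmt1 (n k : ℕ) (A : Fin k → Matrix (Fin n) (Fin n) ℝ)
    (h01 : ∀ i a b, A i a b = 0 ∨ A i a b = 1)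
    (hsum : ∑ i, A i = fun _ _ => (1 : ℝ))
    (h : ∀ x : Fin k → ℝ, (∀ i, x i = 0 ∨ x i = 1) →
        (∑ i, x i • A i) * (∑ i, x i • A i)ᵀ = (∑ i, x i • A i)ᵀ * (∑ i, x i • A i)) :
    ∀ x : Fin k → ℝ,
      (∑ i, x i • A i) * (∑ i, x i • A i)ᵀ = (∑ i, x i • A i)ᵀ * (∑ i, x i • A i) := by
  have hsingle : ∀ i, A i * (A i)ᵀ = (A i)ᵀ * A i := by
    intro i
    have := h (fun l => if l = i then 1 else 0)
      (by intro l; by_cases hl : l = i <;> simp [hl])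
    simpa [ite_smul, Finset.sum_ite_eq'] using this
  have key : ∀ i j, A i * (A j)ᵀ + A j * (A i)ᵀ = (A i)ᵀ * A j + (A j)ᵀ * A i := by
    intro i j
    by_cases hij : i = j
    · subst hij; rw [hsingle i]
    · have heq := h (fun l => (if l = i then 1 else 0) + (if l = j then 1 else 0))
        (by
          intro l
          by_cases hi : l = i <;> by_cases hj : l = j <;> simp_all)
      have hsumx : (∑ l, ((if l = i then (1:ℝ) else 0) + (if l = j then 1 else 0)) • A l)
          = A i + A j := by
        simp [add_smul, Finset.sum_add_distrib, ite_smul, Finset.sum_ite_eq']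
      rw [hsumx] at heq
      have e1 : (A i + A j) * (A i + A j)ᵀ
          = A i * (A i)ᵀ + (A i * (A j)ᵀ + A j * (A i)ᵀ) + A j * (A j)ᵀ := by
        rw [transpose_add]; noncomm_ring
      have e2 : (A i + A j)ᵀ * (A i + A j)
          = (A i)ᵀ * A i + ((A i)ᵀ * A j + (A j)ᵀ * A i) + (A j)ᵀ * A j := by
        rw [transpose_add]; noncomm_ring
      rw [e1, e2, hsingle i, hsingle j] at heq
      exact add_left_cancel (add_right_cancel heq)
  intro x
  have exp1 : (∑ i, x i • A i) * (∑ i, x i • A i)ᵀ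
      = ∑ i, ∑ j, (x i * x j) • (A i * (A j)ᵀ) := by
    simp only [transpose_sum, transpose_smul, Finset.sum_mul, Finset.mul_sum,
      smul_mul_assoc, mul_smul_comm, smul_smul, Finset.smul_sum]
    rw [Finset.sum_comm]
    exact Finset.sum_congr rfl fun i _ => Finset.sum_congr rfl fun j _ => by rw [mul_comm]
  have exp2 : (∑ i, x i • A i)ᵀ * (∑ i, x i • A i)
      = ∑ i, ∑ j, (x i * x j) • ((A i)ᵀ * A j) := by
    simp only [transpose_sum, transpose_smul, Finset.sum_mul, Finset.mul_sum,
      smul_mul_assoc, mul_smul_comm, smul_smul, Finset.smul_sum]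
    rw [Finset.sum_comm]
    exact Finset.sum_congr rfl fun i _ => Finset.sum_congr rfl fun j _ => by rw [mul_comm]
  rw [exp1, exp2, ← sub_eq_zero, ← Finset.sum_sub_distrib]
  simp only [← Finset.sum_sub_distrib, ← smul_sub]
  set M : Fin k → Fin k → Matrix (Fin n) (Fin n) ℝ :=
    fun i j => A i * (A j)ᵀ - (A i)ᵀ * A j with hM
  have hanti : ∀ i j, M j i = -(M i j) := by
    intro i j
    have h0 : M j i + M i j = 0 := by
      show (A j * (A i)ᵀ - (A j)ᵀ * A i) + (A i * (A j)ᵀ - (A i)ᵀ * A j) = 0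
      rw [sub_add_sub_comm, add_comm (A j * (A i)ᵀ), add_comm ((A j)ᵀ * A i),
        key i j, sub_self]
    exact eq_neg_of_add_eq_zero_left h0
  set T : Matrix (Fin n) (Fin n) ℝ := ∑ i, ∑ j, (x i * x j) • M i j with hT
  show T = 0
  have hTneg : T = -T := by
    calc T = ∑ i, ∑ j, (x j * x i) • M j i := by rw [hT, Finset.sum_comm]
    _ = ∑ i, ∑ j, -((x i * x j) • M i j) := by
        exact Finset.sum_congr rfl fun i _ => Finset.sum_congr rfl fun j _ => by
          rw [hanti, mul_comm, smul_neg]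
    _ = -T := by rw [hT]; simp [Finset.sum_neg_distrib]
  have h2 : T + T = 0 := by nth_rewrite 2 [hTneg]; exact add_neg_cancel T
  have h3 : (2 : ℝ) • T = 0 := by rw [two_smul]; exact h2
  rcases smul_eq_zero.mp h3 with h4 | h4
  · norm_num at h4
  · exact h4
end

section
/- Let A₁, A₂ be n×n real 0-1 matrices with A₁ + A₂ = J. Then x·A₁ + y·A₂ is normal for all real x, y if and only if A₁ is normal. -/
/-!
Since `A₂ = J - A₁`, every `x • A₁ + y • A₂` equals `y • J + (x - y) • A₁`, and a combination
of two normal matrices `S`, `A` is normal as soon as the cross terms agree: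
`S Aᵀ + A Sᵀ = Sᵀ A + Aᵀ S`.
For `S = J` the cross terms carry the row and column sums of `A₁`. For a 0-1 matrix the diagonal
entries of `A Aᵀ` and `Aᵀ A` are exactly its row and column sums, so normality of `A₁` forces
them to agree.
-/

namespace Matrix

variable {n R : Type*} [Fintype n]

theorem commute_transpose_smul_add_smul [CommRing R] {S A : Matrix n n R}
    (hS : Commute S Sᵀ) (hA : Commute A Aᵀ) (hSA : S * Aᵀ + A * Sᵀ = Sᵀ * A + Aᵀ * S)
    (a b : R) :
    Commute (a • S + b • A) (a • S + b • A)ᵀ := by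
  have hcross : (a * b) • (S * Aᵀ) + (a * b) • (A * Sᵀ) =
      (a * b) • (Sᵀ * A) + (a * b) • (Aᵀ * S) := by
    rw [← smul_add, ← smul_add, hSA]
  simp only [Commute, SemiconjBy, transpose_add, transpose_smul, add_mul, mul_add,
    Matrix.smul_mul, Matrix.mul_smul, smul_smul, hS.eq, hA.eq]
  rw [mul_comm b a]
  linear_combination (norm := abel) hcross

theorem mul_transpose_apply_self_of_zero_or_one [Semiring R] {A : Matrix n n R}
    (h01 : ∀ i j, A i j = 0 ∨ A i j = 1) (i : n) : (A * Aᵀ) i i = ∑ k, A i k := by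
  simp only [mul_apply, transpose_apply]
  refine Finset.sum_congr rfl fun k _ => ?_
  rcases h01 i k with h | h <;> simp [h]

theorem sum_row_eq_sum_col_of_commute_transpose [Semiring R] {A : Matrix n n R}
    (h01 : ∀ i j, A i j = 0 ∨ A i j = 1) (hA : Commute A Aᵀ) (i : n) :
    ∑ k, A i k = ∑ k, A k i := by
  have hAT : Aᵀ * Aᵀᵀ = Aᵀ * A := by rw [transpose_transpose]
  rw [← mul_transpose_apply_self_of_zero_or_one h01, hA.eq, ← hAT,
    mul_transpose_apply_self_of_zero_or_one (A := Aᵀ) (fun i j => h01 j i)]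
  rfl

theorem mul_allOnes_eq_transpose_mul_allOnes [Semiring R] {A : Matrix n n R}
    (hsum : ∀ i, ∑ k, A i k = ∑ k, A k i) :
    A * of (fun _ _ => (1 : R)) = Aᵀ * of (fun _ _ => 1) := by
  ext i j
  simpa [mul_apply] using hsum i

end Matrix

open Matrix

theorem stmt3_general (n : ℕ) (A₁ A₂ : Matrix (Fin n) (Fin n) ℝ)
    (h01₁ : ∀ a b, A₁ a b = 0 ∨ A₁ a b = 1)
    (hsum : A₁ + A₂ = fun _ _ => (1 : ℝ)) :
    (∀ x y : ℝ,
        (x • A₁ + y • A₂) * (x • A₁ + y • A₂)ᵀ = (x • A₁ + y • A₂)ᵀ * (x • A₁ + y • A₂)) ↔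
      A₁ * A₁ᵀ = A₁ᵀ * A₁ := by
  refine ⟨fun h => by simpa using h 1 0, fun hA x y => ?_⟩
  set J : Matrix (Fin n) (Fin n) ℝ := of fun _ _ => 1
  have hJT : Jᵀ = J := rfl
  have hA₂ : A₂ = J - A₁ := eq_sub_of_add_eq' hsum
  have hrow : A₁ * J = A₁ᵀ * J :=
    mul_allOnes_eq_transpose_mul_allOnes (sum_row_eq_sum_col_of_commute_transpose h01₁ hA)
  have hcol : J * A₁ᵀ = J * A₁ := by
    simpa only [transpose_mul, transpose_transpose, hJT] using congrArg transpose hrow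
  have hcomb : x • A₁ + y • A₂ = y • J + (x - y) • A₁ := by
    rw [hA₂]; module
  rw [hcomb]
  refine commute_transpose_smul_add_smul (by rw [hJT]) hA ?_ y (x - y)
  rw [hJT, hrow, hcol, add_comm]

theorem stmt3 (n : ℕ) (A₁ A₂ : Matrix (Fin n) (Fin n) ℝ)
    (h01₁ : ∀ a b, A₁ a b = 0 ∨ A₁ a b = 1)
    (h01₂ : ∀ a b, A₂ a b = 0 ∨ A₂ a b = 1)
    (hsum : A₁ + A₂ = fun _ _ => (1 : ℝ)) :
    (∀ x y : ℝ,
        (x • A₁ + y • A₂) * (x • A₁ + y • A₂)ᵀ = (x • A₁ + y • A₂)ᵀ * (x • A₁ + y • A₂)) ↔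
      A₁ * A₁ᵀ = A₁ᵀ * A₁ :=
  stmt3_general n A₁ A₂ h01₁ hsum
end

section
/- Let B be an n×n normal 0-1 matrix (n ≥ 3) with exactly three entries equal to 1. Then B is permutation similar to one of: (a) I₃ ⊕ O_{n-3}, (b) [[1,1],[1,0]] ⊕ O_{n-2}, (c) [[1,0,0],[0,0,1],[0,1,0]] ⊕ O_{n-3}, (d) [[0,1,0],[0,0,1],[1,0,0]] ⊕ O_{n-3}. -/
open Finset

section aux
variable {α : Type*} [DecidableEq α]

noncomputable def indf (a v : α) : ℝ := if a = v then 1 else 0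

def Bal (p q r : α × α) : Prop :=
  ∀ v, indf p.1 v + indf q.1 v + indf r.1 v = indf p.2 v + indf q.2 v + indf r.2 v

lemma bal_perm1 {p q r : α × α} (h : Bal p q r) : Bal q p r :=
  fun v => by have := h v; unfold Bal at *; linarith

lemma bal_perm2 {p q r : α × α} (h : Bal p q r) : Bal p r q :=
  fun v => by have := h v; unfold Bal at *; linarith

lemma bal_swap {p q r : α × α} (h : Bal p q r) :
    Bal (p.2, p.1) (q.2, q.1) (r.2, r.1) := fun v => (h v).symm

lemma two_loops {p q r : α × α} (hp : p.1 = p.2) (hq : q.1 = q.2) (hr : r.1 ≠ r.2)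
    (hbal : Bal p q r) : False := by
  have h := hbal r.1
  unfold indf at h
  rw [← hp, ← hq] at h
  split_ifs at h <;> simp_all

end aux

lemma exists_third {n : ℕ} (hn : 3 ≤ n) (a b : Fin n) : ∃ c : Fin n, c ≠ a ∧ c ≠ b := by
  by_contra h
  push_neg at h
  have hsub : (Finset.univ : Finset (Fin n)) ⊆ {a, b} := by
    intro c _
    rcases Decidable.em (c = a) with h1 | h1
    · simp [h1]
    · simp [h c h1]
  have := Finset.card_le_card hsub
  have h2 : ({a, b} : Finset (Fin n)).card ≤ 2 := Finset.card_insert_le _ _ |>.trans (by simp)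
  simp [Finset.card_univ] at this
  omega

lemma exists_perm {n : ℕ} (hn : 3 ≤ n) (a b c : Fin n) (hab : a ≠ b) (hac : a ≠ c)
    (hbc : b ≠ c) :
    ∃ σ : Equiv.Perm (Fin n),
      σ ⟨0, by omega⟩ = a ∧ σ ⟨1, by omega⟩ = b ∧ σ ⟨2, by omega⟩ = c := by
  set i0 : Fin n := ⟨0, by omega⟩
  set i1 : Fin n := ⟨1, by omega⟩
  set i2 : Fin n := ⟨2, by omega⟩
  have h01 : i0 ≠ i1 := by simp [i0, i1, Fin.ext_iff]
  have h02 : i0 ≠ i2 := by simp [i0, i2, Fin.ext_iff]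
  have h12 : i1 ≠ i2 := by simp [i1, i2, Fin.ext_iff]
  set τ1 : Equiv.Perm (Fin n) := Equiv.swap i0 a with hτ1
  set b' := τ1.symm b with hb'
  have hb'0 : b' ≠ i0 := by
    intro h
    apply hab
    have : τ1 b' = b := τ1.apply_symm_apply b
    rw [h] at this
    rw [← this]
    simp [τ1]
  set τ2 : Equiv.Perm (Fin n) := Equiv.swap i1 b' with hτ2
  have hτ2i0 : τ2 i0 = i0 := Equiv.swap_apply_of_ne_of_ne h01 (Ne.symm hb'0)
  set c' := τ2.symm (τ1.symm c) with hc'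
  have key : τ1 (τ2 c') = c := by rw [hc']; simp
  have hc'0 : c' ≠ i0 := by
    intro h
    apply hac
    rw [← key, h, hτ2i0]
    simp [τ1]
  have hc'1 : c' ≠ i1 := by
    intro h
    apply hbc
    rw [← key, h]
    have : τ2 i1 = b' := Equiv.swap_apply_left _ _
    rw [this, hb']
    simp
  set τ3 : Equiv.Perm (Fin n) := Equiv.swap i2 c' with hτ3
  refine ⟨τ1 * (τ2 * τ3), ?_, ?_, ?_⟩
  · have h3 : τ3 i0 = i0 := Equiv.swap_apply_of_ne_of_ne h02 (Ne.symm hc'0)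
    simp only [Equiv.Perm.mul_apply, h3, hτ2i0]
    simp [τ1]
  · have h3 : τ3 i1 = i1 := Equiv.swap_apply_of_ne_of_ne h12 (Ne.symm hc'1)
    simp only [Equiv.Perm.mul_apply, h3]
    have : τ2 i1 = b' := Equiv.swap_apply_left _ _
    rw [this, hb']
    simp
  · have h3 : τ3 i2 = c' := Equiv.swap_apply_left _ _
    simp only [Equiv.Perm.mul_apply, h3]
    exact key

section classify
variable {α : Type*} [DecidableEq α]

lemma triple_comm12 (p q r : α × α) : ({p, q, r} : Finset (α × α)) = {q, p, r} := by
  ext z; simp; tauto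

lemma triple_comm23 (p q r : α × α) : ({p, q, r} : Finset (α × α)) = {p, r, q} := by
  ext z; simp; tauto

lemma one_loop {p q r : α × α} (hp : p.1 = p.2) (hq : q.1 ≠ q.2) (hr : r.1 ≠ r.2)
    (hbal : Bal p q r) :
    (∃ a b, a ≠ b ∧ ({p, q, r} : Finset (α × α)) = {(a, a), (a, b), (b, a)}) ∨
    (∃ a b c, a ≠ b ∧ a ≠ c ∧ b ≠ c ∧
      ({p, q, r} : Finset (α × α)) = {(a, a), (b, c), (c, b)}) := by
  -- step 1: r = (q.2, q.1)
  have hq' : q.2 ≠ q.1 := Ne.symm hq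
  have h1 := hbal q.1
  unfold indf at h1
  rw [← hp] at h1
  have hr2 : r.2 = q.1 ∧ r.1 ≠ q.1 := by
    constructor
    · by_contra hw
      by_cases hz : r.1 = q.1
      · simp [hz, hw, hq'] at h1; linarith
      · simp [hz, hw, hq'] at h1
    · intro hz
      by_cases hw : r.2 = q.1
      · exact hr (hz.trans hw.symm)
      · simp [hz, hw, hq'] at h1; linarith
  obtain ⟨hw, hz⟩ := hr2
  have h2 := hbal q.2
  unfold indf at h2
  rw [← hp] at h2
  have hr1 : r.1 = q.2 := by
    by_contra hz1
    have hw2 : r.2 ≠ q.2 := by rw [hw]; exact hq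
    simp [hz1, hw2, hq] at h2
  have hreq : r = (q.2, q.1) := Prod.ext hr1 hw
  by_cases hpa : p.1 = q.1
  · left
    refine ⟨q.1, q.2, hq, ?_⟩
    have hpe : p = (q.1, q.1) := Prod.ext hpa (hp ▸ hpa)
    rw [hpe, hreq]
  · by_cases hpb : p.1 = q.2
    · left
      refine ⟨q.2, q.1, hq', ?_⟩
      have hpe : p = (q.2, q.2) := Prod.ext hpb (hp ▸ hpb)
      rw [hpe, hreq]
      have : q = (q.1, q.2) := rfl
      rw [this, triple_comm23]
    · right
      refine ⟨p.1, q.1, q.2, hpa, hpb, hq, ?_⟩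
      have hpe : p = (p.1, p.1) := Prod.ext rfl hp.symm
      rw [hreq]
      nth_rewrite 1 [hpe]
      have : q = (q.1, q.2) := rfl
      rw [this]

lemma no_srcs_eq {p q r : α × α} (hp : p.1 ≠ p.2) (hq : q.1 ≠ q.2)
    (hbal : Bal p q r) (he : p.1 = q.1) : False := by
  have h := hbal p.1
  unfold indf at h
  have h1 : q.2 ≠ p.1 := by rw [he]; exact hq.symm
  simp [← he, Ne.symm hp, h1] at h
  split_ifs at h <;> norm_num at h

lemma cyc_core {p q r : α × α}
    (hx12 : p.1 ≠ q.1) (hx13 : p.1 ≠ r.1) (hx23 : q.1 ≠ r.1)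
    (hy12 : p.2 ≠ q.2) (hy13 : p.2 ≠ r.2) (hy23 : q.2 ≠ r.2)
    (hp : p.1 ≠ p.2) (hq : q.1 ≠ q.2) (hr : r.1 ≠ r.2)
    (hbal : Bal p q r) (hq1 : q.1 = p.2) :
    ∃ a b c, a ≠ b ∧ a ≠ c ∧ b ≠ c ∧
      ({p, q, r} : Finset (α × α)) = {(a, b), (b, c), (c, a)} := by
  have hr1 : r.1 = q.2 := by
    by_cases hx1y2 : p.1 = q.2
    · -- q = (p.2, p.1); contradiction via bal at r.1
      exfalso
      have h := hbal r.1
      unfold indf at h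
      have e1 : p.1 ≠ r.1 := hx13
      have e2 : q.1 ≠ r.1 := hx23
      have e3 : p.2 ≠ r.1 := by rw [← hq1]; exact hx23
      have e4 : q.2 ≠ r.1 := by rw [← hx1y2]; exact hx13
      have e5 : r.2 ≠ r.1 := Ne.symm hr
      simp [e1, e2, e3, e4, e5] at h
    · have h := hbal q.2
      unfold indf at h
      have e1 : p.1 ≠ q.2 := hx1y2
      have e2 : q.1 ≠ q.2 := hq
      have e3 : p.2 ≠ q.2 := hy12
      have e4 : r.2 ≠ q.2 := Ne.symm hy23
      simp [e1, e2, e3, e4] at h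
      by_contra hc
      simp [hc] at h
  have hr2 : r.2 = p.1 := by
    have h := hbal p.1
    unfold indf at h
    have e2 : q.1 ≠ p.1 := Ne.symm hx12
    have e3 : r.1 ≠ p.1 := Ne.symm hx13
    have e4 : p.2 ≠ p.1 := Ne.symm hp
    have e5 : q.2 ≠ p.1 := by rw [← hr1]; exact Ne.symm hx13
    simp [e2, e3, e4, e5] at h
    by_contra hc
    simp [hc] at h
  refine ⟨p.1, p.2, q.2, hp, fun h => hx13 (h.trans hr1.symm), hy12, ?_⟩
  have h1 : p = (p.1, p.2) := rfl
  have h2 : q = (p.2, q.2) := Prod.ext hq1 rfl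
  have h3 : r = (q.2, p.1) := Prod.ext hr1 hr2
  rw [h3]
  nth_rewrite 1 [h1, h2]
  rfl

lemma no_loops {p q r : α × α} (hp : p.1 ≠ p.2) (hq : q.1 ≠ q.2) (hr : r.1 ≠ r.2)
    (hbal : Bal p q r) :
    ∃ a b c, a ≠ b ∧ a ≠ c ∧ b ≠ c ∧
      ({p, q, r} : Finset (α × α)) = {(a, b), (b, c), (c, a)} := by
  have hx12 : p.1 ≠ q.1 := fun h => no_srcs_eq hp hq hbal h
  have hx13 : p.1 ≠ r.1 := fun h => no_srcs_eq hp hr (bal_perm2 hbal) h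
  have hx23 : q.1 ≠ r.1 := fun h => no_srcs_eq hq hr (bal_perm2 (bal_perm1 hbal)) h
  have hbs := bal_swap hbal
  have hy12 : p.2 ≠ q.2 := fun h => no_srcs_eq (Ne.symm hp) (Ne.symm hq) hbs h
  have hy13 : p.2 ≠ r.2 := fun h => no_srcs_eq (Ne.symm hp) (Ne.symm hr) (bal_perm2 hbs) h
  have hy23 : q.2 ≠ r.2 :=
    fun h => no_srcs_eq (Ne.symm hq) (Ne.symm hr) (bal_perm2 (bal_perm1 hbs)) h
  -- bal at p.2 : q.1 = p.2 or r.1 = p.2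
  have hkey : q.1 = p.2 ∨ r.1 = p.2 := by
    have h := hbal p.2
    unfold indf at h
    have e1 : p.1 ≠ p.2 := hp
    have e3 : q.2 ≠ p.2 := Ne.symm hy12
    have e4 : r.2 ≠ p.2 := Ne.symm hy13
    simp [e1, e3, e4] at h
    by_contra hc
    push_neg at hc
    simp [hc.1, hc.2] at h
  rcases hkey with hk | hk
  · exact cyc_core hx12 hx13 hx23 hy12 hy13 hy23 hp hq hr hbal hk
  · obtain ⟨a, b, c, h1, h2, h3, h4⟩ :=
      cyc_core hx13 hx12 (Ne.symm hx23) hy13 hy12 (Ne.symm hy23) hp hr hq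
        (bal_perm2 hbal) hk
    exact ⟨a, b, c, h1, h2, h3, (triple_comm23 p q r).trans h4⟩

lemma classify {p q r : α × α} (hpq : p ≠ q) (hpr : p ≠ r) (hqr : q ≠ r)
    (hbal : Bal p q r) :
    (∃ a b c, a ≠ b ∧ a ≠ c ∧ b ≠ c ∧
      ({p, q, r} : Finset (α × α)) = {(a, a), (b, b), (c, c)}) ∨
    (∃ a b, a ≠ b ∧ ({p, q, r} : Finset (α × α)) = {(a, a), (a, b), (b, a)}) ∨
    (∃ a b c, a ≠ b ∧ a ≠ c ∧ b ≠ c ∧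
      ({p, q, r} : Finset (α × α)) = {(a, a), (b, c), (c, b)}) ∨
    (∃ a b c, a ≠ b ∧ a ≠ c ∧ b ≠ c ∧
      ({p, q, r} : Finset (α × α)) = {(a, b), (b, c), (c, a)}) := by
  by_cases hp : p.1 = p.2 <;> by_cases hq : q.1 = q.2 <;> by_cases hr : r.1 = r.2
  · -- all loops
    left
    refine ⟨p.1, q.1, r.1, ?_, ?_, ?_, ?_⟩
    · exact fun h => hpq (Prod.ext h (hp ▸ hq ▸ h))
    · exact fun h => hpr (Prod.ext h (hp ▸ hr ▸ h))
    · exact fun h => hqr (Prod.ext h (hq ▸ hr ▸ h))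
    · rw [show p = (p.1, p.1) from Prod.ext rfl hp.symm,
        show q = (q.1, q.1) from Prod.ext rfl hq.symm,
        show r = (r.1, r.1) from Prod.ext rfl hr.symm]
  · exact absurd (two_loops hp hq hr hbal) (by simp)
  · exact absurd (two_loops hp hr hq (bal_perm2 hbal)) (by simp)
  · -- p loop, q r not
    rcases one_loop hp hq hr hbal with h | h
    · right; left; exact h
    · right; right; left; exact h
  · exact absurd (two_loops hq hr hp (bal_perm2 (bal_perm1 hbal))) (by simp)
  · rcases one_loop hq hp hr (bal_perm1 hbal) with ⟨a, b, h1, h2⟩ | ⟨a, b, c, h1, h2, h3, h4⟩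
    · right; left; exact ⟨a, b, h1, (triple_comm12 p q r).trans h2⟩
    · right; right; left; exact ⟨a, b, c, h1, h2, h3, (triple_comm12 p q r).trans h4⟩
  · rcases one_loop hr hp hq (bal_perm1 (bal_perm2 hbal)) with
      ⟨a, b, h1, h2⟩ | ⟨a, b, c, h1, h2, h3, h4⟩
    · right; left
      refine ⟨a, b, h1, ?_⟩
      rw [← h2]; ext z; simp; tauto
    · right; right; left
      refine ⟨a, b, c, h1, h2, h3, ?_⟩
      rw [← h4]; ext z; simp; tauto
  · right; right; right; exact no_loops hp hq hr hbal

end classify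

open Matrix

theorem stmt6 (n : ℕ) (hn : 3 ≤ n) (B : Matrix (Fin n) (Fin n) ℝ)
    (h01 : ∀ a b, B a b = 0 ∨ B a b = 1)
    (hB : B * Bᵀ = Bᵀ * B)
    (hthree : (Finset.univ.filter fun p : Fin n × Fin n => B p.1 p.2 = 1).card = 3) :
    ∃ σ : Equiv.Perm (Fin n),
      B.submatrix σ σ = (fun i j => if i = j ∧ i.val < 3 then (1 : ℝ) else 0) ∨
      B.submatrix σ σ =
        (fun i j =>
          if (i.val = 0 ∧ j.val ≤ 1) ∨ (i.val = 1 ∧ j.val = 0) then (1 : ℝ) else 0) ∨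
      B.submatrix σ σ =
        (fun i j =>
          if (i.val = 0 ∧ j.val = 0) ∨ (i.val = 1 ∧ j.val = 2) ∨ (i.val = 2 ∧ j.val = 1)
          then (1 : ℝ) else 0) ∨
      B.submatrix σ σ =
        (fun i j =>
          if (i.val = 0 ∧ j.val = 1) ∨ (i.val = 1 ∧ j.val = 2) ∨ (i.val = 2 ∧ j.val = 0)
          then (1 : ℝ) else 0) := by
  obtain ⟨p, q, r, hpq, hpr, hqr, hS⟩ := Finset.card_eq_three.mp hthree
  have hmem : ∀ x y, B x y = 1 ↔ ((x, y) = p ∨ (x, y) = q ∨ (x, y) = r) := by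
    intro x y
    have h1 : ((x, y) ∈ Finset.univ.filter fun z : Fin n × Fin n => B z.1 z.2 = 1) ↔
        B x y = 1 := by simp
    rw [← h1, hS]
    simp
  have hform : ∀ x y, B x y = if ((x, y) = p ∨ (x, y) = q ∨ (x, y) = r) then 1 else 0 := by
    intro x y
    split_ifs with h
    · exact (hmem x y).2 h
    · rcases h01 x y with h0 | h1
      · exact h0
      · exact absurd ((hmem x y).1 h1) h
  have hsplit : ∀ z : Fin n × Fin n,
      (if (z = p ∨ z = q ∨ z = r) then (1 : ℝ) else 0) =
        (if z = p then 1 else 0) + (if z = q then 1 else 0) + (if z = r then 1 else 0) := by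
    intro z
    by_cases h1 : z = p <;> by_cases h2 : z = q <;> by_cases h3 : z = r <;> simp_all
  have single1 : ∀ (v : Fin n) (w : Fin n × Fin n),
      ∑ j, (if (v, j) = w then (1 : ℝ) else 0) = indf w.1 v := by
    intro v w
    unfold indf
    by_cases hv : w.1 = v
    · have he : ∀ j, ((v, j) = w) ↔ (j = w.2) := by
        intro j
        rw [Prod.ext_iff]
        simp [hv.symm]
      simp only [he]
      rw [Finset.sum_ite_eq' Finset.univ w.2 (fun _ => (1 : ℝ))]
      simp [hv]
    · have he : ∀ j, ¬((v, j) = w) := fun j h => hv (congrArg Prod.fst h).symm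
      simp [he, hv]
  have single2 : ∀ (v : Fin n) (w : Fin n × Fin n),
      ∑ j, (if (j, v) = w then (1 : ℝ) else 0) = indf w.2 v := by
    intro v w
    unfold indf
    by_cases hv : w.2 = v
    · have he : ∀ j, ((j, v) = w) ↔ (j = w.1) := by
        intro j
        rw [Prod.ext_iff]
        simp [hv.symm]
      simp only [he]
      rw [Finset.sum_ite_eq' Finset.univ w.1 (fun _ => (1 : ℝ))]
      simp [hv]
    · have he : ∀ j, ¬((j, v) = w) := fun j h => hv (congrArg Prod.snd h).symm
      simp [he, hv]
  have hsum1 : ∀ v, ∑ j, B v j = indf p.1 v + indf q.1 v + indf r.1 v := by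
    intro v
    have : ∑ j, B v j = ∑ j, ((if (v, j) = p then (1 : ℝ) else 0) +
        (if (v, j) = q then 1 else 0) + (if (v, j) = r then 1 else 0)) :=
      Finset.sum_congr rfl fun j _ => by rw [hform, hsplit]
    rw [this, Finset.sum_add_distrib, Finset.sum_add_distrib, single1, single1, single1]
  have hsum2 : ∀ v, ∑ j, B j v = indf p.2 v + indf q.2 v + indf r.2 v := by
    intro v
    have : ∑ j, B j v = ∑ j, ((if (j, v) = p then (1 : ℝ) else 0) +
        (if (j, v) = q then 1 else 0) + (if (j, v) = r then 1 else 0)) :=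
      Finset.sum_congr rfl fun j _ => by rw [hform, hsplit]
    rw [this, Finset.sum_add_distrib, Finset.sum_add_distrib, single2, single2, single2]
  have hsq : ∀ x y, B x y * B x y = B x y := by
    intro x y
    rcases h01 x y with h | h <;> rw [h] <;> ring
  have hbal : Bal p q r := by
    intro v
    have hd := congrFun (congrFun hB v) v
    simp only [Matrix.mul_apply, Matrix.transpose_apply] at hd
    rw [Finset.sum_congr rfl fun j _ => hsq v j,
      Finset.sum_congr rfl fun j _ => hsq j v] at hd
    rw [hsum1 v, hsum2 v] at hd
    exact hd
  rcases classify hpq hpr hqr hbal with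
    ⟨a, b, c, hab, hac, hbc, hset⟩ | ⟨a, b, hab, hset⟩ |
    ⟨a, b, c, hab, hac, hbc, hset⟩ | ⟨a, b, c, hab, hac, hbc, hset⟩
  · -- three loops
    obtain ⟨σ, hσa, hσb, hσc⟩ := exists_perm hn a b c hab hac hbc
    have hchar : ∀ z : Fin n × Fin n,
        (z = p ∨ z = q ∨ z = r) ↔ (z = (a, a) ∨ z = (b, b) ∨ z = (c, c)) := by
      intro z
      have h1 : z ∈ ({p, q, r} : Finset (Fin n × Fin n)) ↔
          z ∈ ({(a, a), (b, b), (c, c)} : Finset (Fin n × Fin n)) := by rw [hset]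
      simpa using h1
    refine ⟨σ, Or.inl ?_⟩
    funext i j
    simp only [Matrix.submatrix_apply]
    rw [hform]
    refine if_congr ((hchar _).trans ?_) rfl rfl
    simp only [Prod.mk.injEq, ← hσa, ← hσb, ← hσc, Equiv.apply_eq_iff_eq, Fin.ext_iff]
    try simp only [Fin.val_mk]
    try omega
  · -- loop + 2-cycle sharing vertex
    obtain ⟨c, hca, hcb⟩ := exists_third hn a b
    obtain ⟨σ, hσa, hσb, hσc⟩ := exists_perm hn a b c hab (Ne.symm hca) (Ne.symm hcb)
    have hchar : ∀ z : Fin n × Fin n,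
        (z = p ∨ z = q ∨ z = r) ↔ (z = (a, a) ∨ z = (a, b) ∨ z = (b, a)) := by
      intro z
      have h1 : z ∈ ({p, q, r} : Finset (Fin n × Fin n)) ↔
          z ∈ ({(a, a), (a, b), (b, a)} : Finset (Fin n × Fin n)) := by rw [hset]
      simpa using h1
    refine ⟨σ, Or.inr (Or.inl ?_)⟩
    funext i j
    simp only [Matrix.submatrix_apply]
    rw [hform]
    refine if_congr ((hchar _).trans ?_) rfl rfl
    simp only [Prod.mk.injEq, ← hσa, ← hσb, Equiv.apply_eq_iff_eq, Fin.ext_iff]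
    try simp only [Fin.val_mk]
    try omega
  · -- loop + disjoint 2-cycle
    obtain ⟨σ, hσa, hσb, hσc⟩ := exists_perm hn a b c hab hac hbc
    have hchar : ∀ z : Fin n × Fin n,
        (z = p ∨ z = q ∨ z = r) ↔ (z = (a, a) ∨ z = (b, c) ∨ z = (c, b)) := by
      intro z
      have h1 : z ∈ ({p, q, r} : Finset (Fin n × Fin n)) ↔
          z ∈ ({(a, a), (b, c), (c, b)} : Finset (Fin n × Fin n)) := by rw [hset]
      simpa using h1
    refine ⟨σ, Or.inr (Or.inr (Or.inl ?_))⟩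
    funext i j
    simp only [Matrix.submatrix_apply]
    rw [hform]
    refine if_congr ((hchar _).trans ?_) rfl rfl
    simp only [Prod.mk.injEq, ← hσa, ← hσb, ← hσc, Equiv.apply_eq_iff_eq, Fin.ext_iff]
    try simp only [Fin.val_mk]
    try omega
  · -- 3-cycle
    obtain ⟨σ, hσa, hσb, hσc⟩ := exists_perm hn a b c hab hac hbc
    have hchar : ∀ z : Fin n × Fin n,
        (z = p ∨ z = q ∨ z = r) ↔ (z = (a, b) ∨ z = (b, c) ∨ z = (c, a)) := by
      intro z
      have h1 : z ∈ ({p, q, r} : Finset (Fin n × Fin n)) ↔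
          z ∈ ({(a, b), (b, c), (c, a)} : Finset (Fin n × Fin n)) := by rw [hset]
      simpa using h1
    refine ⟨σ, Or.inr (Or.inr (Or.inr ?_))⟩
    funext i j
    simp only [Matrix.submatrix_apply]
    rw [hform]
    refine if_congr ((hchar _).trans ?_) rfl rfl
    simp only [Prod.mk.injEq, ← hσa, ← hσb, ← hσc, Equiv.apply_eq_iff_eq, Fin.ext_iff]
    try simp only [Fin.val_mk]
    try omega
end

section
/- Let B be an n×n normal 0-1 matrix with all diagonal entries zero and exactly three entries equal to 1. Then each row of B has at most one nonzero entry and each column of B has at most one nonzero entry. -/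
open Matrix

theorem stmt7 (n : ℕ) (B : Matrix (Fin n) (Fin n) ℝ)
    (h01 : ∀ a b, B a b = 0 ∨ B a b = 1)
    (hB : B * Bᵀ = Bᵀ * B)
    (hdiag : ∀ i, B i i = 0)
    (hthree : (Finset.univ.filter fun p : Fin n × Fin n => B p.1 p.2 = 1).card = 3) :
    (∀ i j j', B i j ≠ 0 → B i j' ≠ 0 → j = j') ∧
      (∀ j i i', B i j ≠ 0 → B i' j ≠ 0 → i = i') := by
  have hnn : ∀ a b, 0 ≤ B a b := fun a b => by rcases h01 a b with h | h <;> simp [h]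
  have hsq : ∀ a b, B a b * B a b = B a b := fun a b => by
    rcases h01 a b with h | h <;> simp [h]
  set R : Fin n → ℝ := fun i => ∑ j, B i j with hRdef
  set C : Fin n → ℝ := fun i => ∑ j, B j i with hCdef
  have hRC : ∀ i, R i = C i := by
    intro i
    have := congrFun (congrFun hB i) i
    simpa [Matrix.mul_apply, Matrix.transpose_apply, hsq, hRdef, hCdef] using this
  have hS : ∑ i, R i = 3 := by
    calc ∑ i, R i = ∑ p : Fin n × Fin n, B p.1 p.2 := by
          rw [Fintype.sum_prod_type]
      _ = ∑ p : Fin n × Fin n, if B p.1 p.2 = 1 then (1 : ℝ) else 0 :=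
          Finset.sum_congr rfl (fun p _ => by rcases h01 p.1 p.2 with h | h <;> simp [h])
      _ = ((Finset.univ.filter fun p : Fin n × Fin n => B p.1 p.2 = 1).card : ℝ) := by
          rw [Finset.sum_boole]
      _ = 3 := by rw [hthree]; norm_num
  have key : ∀ x, 2 ≤ R x → False := by
    intro x hx
    have hCx : 2 ≤ C x := by rw [← hRC]; exact hx
    have hsplit : R x + ∑ i ∈ Finset.univ.erase x, R i = 3 := by
      rw [Finset.add_sum_erase _ R (Finset.mem_univ x)] at *
      exact hS
    have hCle : C x ≤ ∑ i ∈ Finset.univ.erase x, R i := by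
      have h1 : C x = ∑ i ∈ Finset.univ.erase x, B i x := by
        show ∑ i, B i x = _
        rw [← Finset.add_sum_erase _ (fun i => B i x) (Finset.mem_univ x), hdiag x, zero_add]
      rw [h1]
      apply Finset.sum_le_sum
      intro i _
      exact Finset.single_le_sum (f := fun j => B i j) (fun j _ => hnn i j) (Finset.mem_univ x)
    linarith
  have two_le : ∀ (x : Fin n) (j j' : Fin n), j ≠ j' → B x j = 1 → B x j' = 1 → 2 ≤ R x := by
    intro x j j' hne h1 h2
    have hsub : ({j, j'} : Finset (Fin n)) ⊆ Finset.univ := Finset.subset_univ _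
    have := Finset.sum_le_sum_of_subset_of_nonneg hsub (fun k _ _ => hnn x k)
    rw [Finset.sum_pair hne, h1, h2] at this
    linarith [this]
  have heq1 : ∀ a b, B a b ≠ 0 → B a b = 1 := by
    intro a b h; rcases h01 a b with h' | h' <;> tauto
  constructor
  · intro i j j' h1 h2
    by_contra hne
    exact key i (two_le i j j' hne (heq1 _ _ h1) (heq1 _ _ h2))
  · intro j i i' h1 h2
    by_contra hne
    have hCj : 2 ≤ C j := by
      have hsub : ({i, i'} : Finset (Fin n)) ⊆ Finset.univ := Finset.subset_univ _
      have := Finset.sum_le_sum_of_subset_of_nonneg hsub (fun k _ _ => hnn k j)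
      rw [Finset.sum_pair hne, heq1 _ _ h1, heq1 _ _ h2] at this
      rw [hCdef]; linarith [this]
    exact key j (by rw [hRC]; exact hCj)
end

section
/- Let B = [[B₁, B₂],[B₂ᵀ, B₃]] be a square real block matrix where B₁ is symmetric (B₁ᵀ = B₁). Then B is normal if and only if B₃ is normal and B₂B₃ = B₂B₃ᵀ. -/
open Matrix

theorem stmt8 (m p : ℕ) (B₁ : Matrix (Fin m) (Fin m) ℝ) (B₂ : Matrix (Fin m) (Fin p) ℝ)
    (B₃ : Matrix (Fin p) (Fin p) ℝ) (hB₁ : B₁ᵀ = B₁) :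
    (Matrix.fromBlocks B₁ B₂ B₂ᵀ B₃) * (Matrix.fromBlocks B₁ B₂ B₂ᵀ B₃)ᵀ =
        (Matrix.fromBlocks B₁ B₂ B₂ᵀ B₃)ᵀ * (Matrix.fromBlocks B₁ B₂ B₂ᵀ B₃) ↔
      (B₃ * B₃ᵀ = B₃ᵀ * B₃ ∧ B₂ * B₃ = B₂ * B₃ᵀ) := by
  rw [fromBlocks_transpose, transpose_transpose, hB₁, fromBlocks_multiply,
    fromBlocks_multiply, fromBlocks_inj]
  constructor
  · rintro ⟨-, h2, -, h4⟩
    exact ⟨add_left_cancel h4, (add_left_cancel h2).symm⟩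
  · rintro ⟨h1, h2⟩
    have h3 : B₃ * B₂ᵀ = B₃ᵀ * B₂ᵀ := by
      have := congrArg Matrix.transpose h2
      simpa [Matrix.transpose_mul] using this.symm
    exact ⟨rfl, by rw [h2], by rw [h3], by rw [h1]⟩
end

section
/- Let n ≥ 3 and let X be a symmetric (n-3)×(n-3) real matrix, Y an (n-3)×3 real matrix whose three columns are all equal, and Z the 3×3 circulant matrix [[z,u,v],[v,z,u],[u,v,z]] for arbitrary real z,u,v. Then the block matrix A = [[X, Y],[Yᵀ, Z]] is normal. -/
open Matrix

theorem stmt13 (n : ℕ) (hn : 3 ≤ n)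
    (X : Matrix (Fin (n - 3)) (Fin (n - 3)) ℝ) (hX : Xᵀ = X)
    (Y : Matrix (Fin (n - 3)) (Fin 3) ℝ) (hY : ∀ i j j', Y i j = Y i j')
    (z u v : ℝ) :
    (Matrix.fromBlocks X Y Yᵀ (!![z, u, v; v, z, u; u, v, z])) *
        (Matrix.fromBlocks X Y Yᵀ (!![z, u, v; v, z, u; u, v, z]))ᵀ =
      (Matrix.fromBlocks X Y Yᵀ (!![z, u, v; v, z, u; u, v, z]))ᵀ *
        (Matrix.fromBlocks X Y Yᵀ (!![z, u, v; v, z, u; u, v, z])) := by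
  set Z : Matrix (Fin 3) (Fin 3) ℝ := !![z, u, v; v, z, u; u, v, z] with hZdef
  have hZT : Zᵀ = !![z, v, u; u, z, v; v, u, z] := by
    ext i j; fin_cases i <;> fin_cases j <;> simp [hZdef]
  have hYZ : Y * Zᵀ = Y * Z := by
    ext i j
    fin_cases j <;> simp [hZT, hZdef, mul_apply, Fin.sum_univ_three, hY i 1 0, hY i 2 0] <;> ring
  have hZY : Z * Yᵀ = Zᵀ * Yᵀ := by
    have := congrArg Matrix.transpose hYZ
    simpa [Matrix.transpose_mul] using this
  have hZZ : Z * Zᵀ = Zᵀ * Z := by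
    ext i j
    fin_cases i <;> fin_cases j <;>
      · simp [hZT, hZdef, mul_apply, Fin.sum_univ_three]; ring
  rw [fromBlocks_transpose, transpose_transpose, hX, fromBlocks_multiply,
    fromBlocks_multiply, hYZ, hZY, hZZ]
end

section
/- Let A₁,…,A_k be n×n real 0-1 matrices summing to J, such that Σᵢ xᵢAᵢ is normal for all real xᵢ. If A₁ has exactly one nonzero entry, located at position (1,1), then the first row of Σᵢ xᵢAᵢ equals the transpose of its first column for all values of the xᵢ; equivalently, each Aⱼ has its first row equal to the transpose of its first column. -/
/-! Taking `x = eⱼ` and `x = eⱼ + e₁` makes both `Aⱼ` and `Aⱼ + A₁` normal. Since `A₁ = E₁₁` is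
symmetric, comparing the two normality equations leaves only the cross terms:
`Aⱼ E₁₁ + E₁₁ Aⱼᵀ = Aⱼᵀ E₁₁ + E₁₁ Aⱼ`. Reading this identity at the entry `(1, i)` with `i ≠ 1` gives `(Aⱼ)ᵢ₁ = (Aⱼ)₁ᵢ`. -/

open Matrix

namespace Matrix

variable {ι R : Type*} [Fintype ι] [DecidableEq ι] [CommRing R]

theorem mul_add_mul_transpose_eq_of_normal_add {B E : Matrix ι ι R} (hE : Eᵀ = E)
    (hB : B * Bᵀ = Bᵀ * B) (hBE : (B + E) * (B + E)ᵀ = (B + E)ᵀ * (B + E)) :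
    B * E + E * Bᵀ = Bᵀ * E + E * B := by
  simp only [transpose_add, hE, add_mul, mul_add] at hBE
  rw [hB, ← sub_eq_zero] at hBE
  rw [← sub_eq_zero, ← hBE]
  abel

theorem apply_eq_apply_of_normal_add_single {B : Matrix ι ι R} (a : ι)
    (hB : B * Bᵀ = Bᵀ * B)
    (hBE : (B + single a a 1) * (B + single a a 1)ᵀ = (B + single a a 1)ᵀ * (B + single a a 1))
    (i : ι) : B a i = B i a := by
  rcases eq_or_ne i a with rfl | hi
  · rfl
  have h := congrFun₂ (mul_add_mul_transpose_eq_of_normal_add (transpose_single a a 1) hB hBE) a i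
  simpa [add_apply, mul_single_apply_of_ne _ _ _ _ _ hi, single_mul_apply_same] using h.symm

end Matrix

theorem Finset.sum_pi_single_one_smul {ι R M : Type*} [Fintype ι] [DecidableEq ι] [Semiring R]
    [AddCommMonoid M] [Module R M] (A : ι → M) (j : ι) :
    ∑ i, (Pi.single j 1 : ι → R) i • A i = A j := by
  simp [Pi.single_apply]

theorem stmt14_general (n k : ℕ) [NeZero n] [NeZero k] (A : Fin k → Matrix (Fin n) (Fin n) ℝ)
    (h : ∀ x : Fin k → ℝ,
        (∑ i, x i • A i) * (∑ i, x i • A i)ᵀ = (∑ i, x i • A i)ᵀ * (∑ i, x i • A i))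
    (hA1 : ∀ a b, A 0 a b = if a = 0 ∧ b = 0 then 1 else 0) :
    ∀ j : Fin k, ∀ i : Fin n, A j 0 i = A j i 0 := by
  intro j
  have hA0 : A 0 = single 0 0 1 := by
    ext a b
    rw [hA1, single_apply]
    simp only [eq_comm]
  have hsum : ∑ i, (Pi.single j 1 + Pi.single 0 1 : Fin k → ℝ) i • A i = A j + A 0 := by
    simp only [Pi.add_apply, add_smul, Finset.sum_add_distrib, Finset.sum_pi_single_one_smul]
  have hnormal := h (Pi.single j 1 + Pi.single 0 1)
  rw [hsum, hA0] at hnormal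
  have hAj := h (Pi.single j 1)
  rw [Finset.sum_pi_single_one_smul] at hAj
  exact apply_eq_apply_of_normal_add_single 0 hAj hnormal

theorem stmt14 (n k : ℕ) [NeZero n] [NeZero k] (A : Fin k → Matrix (Fin n) (Fin n) ℝ)
    (h01 : ∀ i a b, A i a b = 0 ∨ A i a b = 1)
    (hsum : ∑ i, A i = fun _ _ => (1 : ℝ))
    (h : ∀ x : Fin k → ℝ,
        (∑ i, x i • A i) * (∑ i, x i • A i)ᵀ = (∑ i, x i • A i)ᵀ * (∑ i, x i • A i))
    (hA1 : ∀ a b, A 0 a b = if a = 0 ∧ b = 0 then 1 else 0) :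
    ∀ j : Fin k, ∀ i : Fin n, A j 0 i = A j i 0 :=
  stmt14_general n k A h hA1
end

section
/- Let A₁,…,A_k be n×n real 0-1 matrices (n ≥ 2) summing to J, with Σᵢ xᵢAᵢ normal for all real xᵢ. Suppose A₁ = [[0,1],[1,0]] ⊕ O_{n-2}. Then for every j ≠ 1, writing Aⱼ in 2×2 block form [[B₁, B₂],[B₃, B₄]] with B₁ of size 2×2, one has B₃ = B₂ᵀ. -/
/-!
A₁ is symmetric, so expanding the normality of A₁ + Aⱼ and cancelling the normality of Aⱼ shows
that A₁ commutes with the skew part S = Aⱼ - Aⱼᵀ. For a row index a ≥ 2 row a of A₁ vanishes, so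
(A₁ S)_{ac} = 0, while for c the column of A₁ equal to the unit vector e_b (b < 2) the entry
(S A₁)_{ac} is S_{ab}. Hence S_{ab} = 0.
-/

open Matrix

section

variable {m R : Type*} [Fintype m] [DecidableEq m] [Ring R]

theorem Matrix.commute_sub_transpose_of_commute_add_transpose {M N : Matrix m m R}
    (hM : Mᵀ = M) (hN : Commute N Nᵀ) (hMN : Commute (M + N) (M + N)ᵀ) :
    Commute M (N - Nᵀ) := by
  rw [Commute, SemiconjBy, ← sub_eq_zero]
  calc M * (N - Nᵀ) - (N - Nᵀ) * M
      = -((M + N) * (M + N)ᵀ - (M + N)ᵀ * (M + N)) + (N * Nᵀ - Nᵀ * N) := by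
        rw [transpose_add, hM]; noncomm_ring
    _ = 0 := by rw [hMN.eq, hN.eq]; simp

theorem Matrix.apply_eq_zero_of_commute {M S : Matrix m m R} (hMS : Commute M S) {a c d : m}
    (hrow : ∀ x, M a x = 0) (hcol : ∀ x, M x c = if x = d then 1 else 0) : S a d = 0 := by
  have := congrFun (congrFun hMS.eq a) c
  simpa [mul_apply, hrow, hcol] using this.symm

end

theorem stmt15_general (n k : ℕ) [NeZero k] (A : Fin k → Matrix (Fin n) (Fin n) ℝ)
    (h : ∀ x : Fin k → ℝ,
        (∑ i, x i • A i) * (∑ i, x i • A i)ᵀ = (∑ i, x i • A i)ᵀ * (∑ i, x i • A i))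
    (hA1 : ∀ a b : Fin n,
        A 0 a b = if (a.val = 0 ∧ b.val = 1) ∨ (a.val = 1 ∧ b.val = 0) then 1 else 0) :
    ∀ j : Fin k, j ≠ 0 → ∀ a b : Fin n, 2 ≤ a.val → b.val < 2 → A j a b = A j b a := by
  intro j _ a b ha hb
  have hnormal (x : Fin k → ℝ) : Commute (∑ i, x i • A i) (∑ i, x i • A i)ᵀ := h x
  have hsymm : (A 0)ᵀ = A 0 := by
    ext x y
    simp only [transpose_apply, hA1]
    congr 1
    exact propext (by omega)
  have hcomm : Commute (A 0) (A j - (A j)ᵀ) := by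
    refine commute_sub_transpose_of_commute_add_transpose hsymm ?_ ?_
    · simpa [Pi.single_apply] using hnormal (Pi.single j 1)
    · have := hnormal (Pi.single 0 1 + Pi.single j 1)
      simpa [Pi.single_apply, add_smul, Finset.sum_add_distrib]
  have hrow (x : Fin n) : A 0 a x = 0 := by
    rw [hA1]; simp only [ite_eq_right_iff]; omega
  have hcol (x : Fin n) : A 0 x ⟨1 - b.val, by omega⟩ = if x = b then 1 else 0 := by
    rw [hA1]; simp only [Fin.ext_iff]; congr 1; exact propext (by omega)
  simpa [sub_eq_zero] using apply_eq_zero_of_commute hcomm hrow hcol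

theorem stmt15 (n k : ℕ) (hn : 2 ≤ n) [NeZero k] (A : Fin k → Matrix (Fin n) (Fin n) ℝ)
    (h01 : ∀ i a b, A i a b = 0 ∨ A i a b = 1)
    (hsum : ∑ i, A i = fun _ _ => (1 : ℝ))
    (h : ∀ x : Fin k → ℝ,
        (∑ i, x i • A i) * (∑ i, x i • A i)ᵀ = (∑ i, x i • A i)ᵀ * (∑ i, x i • A i))
    (hA1 : ∀ a b : Fin n,
        A 0 a b = if (a.val = 0 ∧ b.val = 1) ∨ (a.val = 1 ∧ b.val = 0) then 1 else 0) :
    ∀ j : Fin k, j ≠ 0 → ∀ a b : Fin n, 2 ≤ a.val → b.val < 2 → A j a b = A j b a :=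
  stmt15_general n k A h hA1
end

section
/- Let A₁, A₂, A₃ be 3×3 normal 0-1 matrices with A₁ + A₂ + A₃ = J₃, each having exactly three nonzero entries, and suppose not all of A₁, A₂, A₃ are symmetric. Then there is a permutation matrix Q such that {A₁, A₂, A₃} = {I₃, QᵀPQ, QᵀPᵀQ}, where P = [[0,1,0],[0,0,1],[1,0,0]]. -/
/-!
A non-symmetric normal 0-1 matrix with three ones is the permutation matrix `P` of a 3-cycle or
its transpose, and a normal 0-1 matrix with three ones whose support avoids that of `P` (resp. `Pᵀ`)
is `I` or `Pᵀ` (resp. `P`). Writing a 0-1 matrix as the image of a Boolean matrix under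
`Bool.toNat` and `Nat.cast`, which reflects normality, symmetry and disjointness of supports, turns
both facts into finite checks. Since `A₁ + A₂ + A₃ = J` makes the supports pairwise disjoint, a
non-symmetric `Aᵢ` is `P` or `Pᵀ`, the other two then lie in `{I, P, Pᵀ}`, and all three are
distinct.
-/

open Finset Matrix

lemma Set.eq_of_subset_of_pairwise_ne {α : Type*} {a b c x y z : α}
    (hab : a ≠ b) (hac : a ≠ c) (hbc : b ≠ c) (h : ({a, b, c} : Set α) ⊆ {x, y, z}) :
    ({a, b, c} : Set α) = {x, y, z} := by
  classical
  refine Set.eq_of_subset_of_ncard_le h ?_ (Set.toFinite _)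
  rw [Set.ncard_eq_three.mpr ⟨a, b, c, hab, hac, hbc, rfl⟩]
  rw [show ({x, y, z} : Set α) = ↑({x, y, z} : Finset α) by simp, Set.ncard_coe_finset]
  exact Finset.card_le_three

namespace Matrix

variable {m n R : Type*}

def IsZeroOne [Zero R] [One R] (A : Matrix m n R) : Prop := ∀ i j, A i j = 0 ∨ A i j = 1

lemma IsZeroOne.exists_eq_map_natCast [AddMonoidWithOne R] [NeZero (1 : R)] {A : Matrix m n R}
    (hA : A.IsZeroOne) : ∃ f : Matrix m n Bool, A = (f.map Bool.toNat).map Nat.cast := by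
  classical
  refine ⟨A.map fun x => decide (x = 1), ?_⟩
  ext i j
  rcases hA i j with h | h <;> simp [h]

lemma IsZeroOne.hadamard_eq_zero_of_add_add_eq_one [Semiring R] [CharZero R]
    {A B C : Matrix m n R} (hA : A.IsZeroOne) (hB : B.IsZeroOne) (hC : C.IsZeroOne)
    (h : A + B + C = fun _ _ => 1) : A ⊙ B = 0 ∧ A ⊙ C = 0 ∧ B ⊙ C = 0 := by
  refine ⟨?_, ?_, ?_⟩ <;> ext i j <;> have hij := congr_fun₂ h i j <;>
    rcases hA i j with ha | ha <;> rcases hB i j with hb | hb <;> rcases hC i j with hc | hc <;>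
    simp_all <;> norm_num at hij

lemma IsZeroOne.ne_of_hadamard_eq_zero [MulZeroOneClass R] {A B : Matrix m n R}
    (hA : A.IsZeroOne) (hA₀ : A ≠ 0) (h : A ⊙ B = 0) : A ≠ B := by
  rintro rfl
  refine hA₀ (h ▸ ?_)
  ext i j
  rcases hA i j with ha | ha <;> simp [ha]

lemma card_map_natCast_eq_one [Fintype m] [Fintype n] [AddMonoidWithOne R] [NeZero (1 : R)]
    [DecidableEq R] (f : Matrix m n Bool) :
    #{p : m × n | (f.map Bool.toNat).map (Nat.cast : ℕ → R) p.1 p.2 = 1} =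
      #{p : m × n | f p.1 p.2} := by
  refine congrArg card (filter_congr fun p _ => ?_)
  cases h : f p.1 p.2 <;> simp [h]

section NatCast

variable [Semiring R] [CharZero R]

lemma map_natCast_injective : Function.Injective fun N : Matrix m n ℕ => N.map (Nat.cast : ℕ → R) :=
  map_injective Nat.cast_injective

lemma map_natCast_transpose_eq_iff {N : Matrix n n ℕ} :
    (N.map (Nat.cast : ℕ → R))ᵀ = N.map Nat.cast ↔ Nᵀ = N := by
  rw [← transpose_map]; exact map_natCast_injective.eq_iff

lemma map_natCast_isNormal_iff [Fintype n] {N : Matrix n n ℕ} :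
    N.map (Nat.cast : ℕ → R) * (N.map Nat.cast)ᵀ = (N.map Nat.cast)ᵀ * N.map Nat.cast ↔
      N * Nᵀ = Nᵀ * N := by
  simp only [← transpose_map, ← Nat.coe_castRingHom, ← Matrix.map_mul]
  exact map_natCast_injective.eq_iff

lemma map_natCast_hadamard_eq_zero_iff {N M : Matrix m n ℕ} :
    N.map (Nat.cast : ℕ → R) ⊙ M.map Nat.cast = 0 ↔ N ⊙ M = 0 := by
  have hmap : N.map (Nat.cast : ℕ → R) ⊙ M.map Nat.cast = (N ⊙ M).map Nat.cast := by
    ext i j; simp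
  rw [hmap, ← Matrix.map_zero _ Nat.cast_zero, map_natCast_injective.eq_iff]

end NatCast

end Matrix

def cycleMatrix {R : Type*} [Zero R] [One R] : Matrix (Fin 3) (Fin 3) R :=
  !![0, 1, 0; 0, 0, 1; 1, 0, 0]

lemma map_cycleMatrix {R S : Type*} [Zero R] [One R] [Zero S] [One S] {f : R → S}
    (h₀ : f 0 = 0) (h₁ : f 1 = 1) : cycleMatrix.map f = cycleMatrix := by
  ext i j; fin_cases i <;> fin_cases j <;> simp [cycleMatrix, h₀, h₁]

lemma map_toNat_eq_cycleMatrix_or_transpose : ∀ f : Matrix (Fin 3) (Fin 3) Bool,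
    #{p : Fin 3 × Fin 3 | f p.1 p.2} = 3 →
    f.map Bool.toNat * (f.map Bool.toNat)ᵀ = (f.map Bool.toNat)ᵀ * f.map Bool.toNat →
    (f.map Bool.toNat)ᵀ ≠ f.map Bool.toNat →
    f.map Bool.toNat = cycleMatrix ∨ f.map Bool.toNat = cycleMatrixᵀ := by
  decide +kernel

lemma map_toNat_eq_one_or_transpose_of_hadamard_eq_zero : ∀ f : Matrix (Fin 3) (Fin 3) Bool,
    #{p : Fin 3 × Fin 3 | f p.1 p.2} = 3 →
    f.map Bool.toNat * (f.map Bool.toNat)ᵀ = (f.map Bool.toNat)ᵀ * f.map Bool.toNat →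
    ∀ C ∈ [cycleMatrix, cycleMatrixᵀ], f.map Bool.toNat ⊙ C = 0 →
    f.map Bool.toNat = 1 ∨ f.map Bool.toNat = Cᵀ := by
  decide +kernel

section

variable {R : Type*} [Semiring R] [CharZero R] [DecidableEq R] {A C : Matrix (Fin 3) (Fin 3) R}

theorem Matrix.IsZeroOne.eq_cycleMatrix_or_transpose (h01 : A.IsZeroOne)
    (hnorm : A * Aᵀ = Aᵀ * A) (hcard : #{p : Fin 3 × Fin 3 | A p.1 p.2 = 1} = 3)
    (hsymm : Aᵀ ≠ A) : A = cycleMatrix ∨ A = cycleMatrixᵀ := by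
  obtain ⟨f, rfl⟩ := h01.exists_eq_map_natCast
  rw [card_map_natCast_eq_one] at hcard
  rw [map_natCast_isNormal_iff] at hnorm
  rw [Ne, map_natCast_transpose_eq_iff] at hsymm
  have hcast := map_cycleMatrix (R := ℕ) (S := R) Nat.cast_zero Nat.cast_one
  rcases map_toNat_eq_cycleMatrix_or_transpose f hcard hnorm hsymm with h | h <;> rw [h]
  · exact .inl hcast
  · exact .inr (by rw [transpose_map, hcast])

theorem Matrix.IsZeroOne.eq_one_or_transpose_of_hadamard_eq_zero
    (hC : C = cycleMatrix ∨ C = cycleMatrixᵀ) (h01 : A.IsZeroOne) (hnorm : A * Aᵀ = Aᵀ * A)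
    (hcard : #{p : Fin 3 × Fin 3 | A p.1 p.2 = 1} = 3) (hdisj : A ⊙ C = 0) :
    A = 1 ∨ A = Cᵀ := by
  obtain ⟨f, rfl⟩ := h01.exists_eq_map_natCast
  have hcast := map_cycleMatrix (R := ℕ) (S := R) Nat.cast_zero Nat.cast_one
  obtain ⟨C₀, hC₀, rfl⟩ : ∃ C₀ ∈ [cycleMatrix, cycleMatrixᵀ], C = C₀.map Nat.cast := by
    rcases hC with rfl | rfl
    · exact ⟨cycleMatrix, by simp, hcast.symm⟩
    · exact ⟨cycleMatrixᵀ, by simp, by rw [transpose_map, hcast]⟩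
  rw [card_map_natCast_eq_one] at hcard
  rw [map_natCast_isNormal_iff] at hnorm
  rw [map_natCast_hadamard_eq_zero_iff] at hdisj
  rcases map_toNat_eq_one_or_transpose_of_hadamard_eq_zero f hcard hnorm C₀ hC₀ hdisj
    with h | h <;> rw [h]
  · exact .inl (Matrix.map_one _ Nat.cast_zero Nat.cast_one)
  · exact .inr transpose_map

end

theorem stmt16 (A₁ A₂ A₃ : Matrix (Fin 3) (Fin 3) ℝ)
    (h01 : ∀ B ∈ ({A₁, A₂, A₃} : Set (Matrix (Fin 3) (Fin 3) ℝ)), ∀ a b, B a b = 0 ∨ B a b = 1)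
    (hnorm : ∀ B ∈ ({A₁, A₂, A₃} : Set (Matrix (Fin 3) (Fin 3) ℝ)), B * Bᵀ = Bᵀ * B)
    (hsum : A₁ + A₂ + A₃ = fun _ _ => (1 : ℝ))
    (hthree : ∀ B ∈ ({A₁, A₂, A₃} : Set (Matrix (Fin 3) (Fin 3) ℝ)),
      (Finset.univ.filter fun p : Fin 3 × Fin 3 => B p.1 p.2 = 1).card = 3)
    (hnonsym : ¬(A₁ᵀ = A₁ ∧ A₂ᵀ = A₂ ∧ A₃ᵀ = A₃)) :
    ∃ σ : Equiv.Perm (Fin 3),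
      ({A₁, A₂, A₃} : Set (Matrix (Fin 3) (Fin 3) ℝ)) =
        {(1 : Matrix (Fin 3) (Fin 3) ℝ),
          (!![0, 1, 0; 0, 0, 1; 1, 0, 0] : Matrix (Fin 3) (Fin 3) ℝ).submatrix σ σ,
          (!![0, 1, 0; 0, 0, 1; 1, 0, 0] : Matrix (Fin 3) (Fin 3) ℝ)ᵀ.submatrix σ σ} := by
  set S : Set (Matrix (Fin 3) (Fin 3) ℝ) := {A₁, A₂, A₃}
  have hmem₁ : A₁ ∈ S := by simp [S]
  have hmem₂ : A₂ ∈ S := by simp [S]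
  have hmem₃ : A₃ ∈ S := by simp [S]
  obtain ⟨h₁₂, h₁₃, h₂₃⟩ := IsZeroOne.hadamard_eq_zero_of_add_add_eq_one
    (h01 A₁ hmem₁) (h01 A₂ hmem₂) (h01 A₃ hmem₃) hsum
  have hdisj : ∀ B ∈ S, ∀ C ∈ S, B ≠ C → B ⊙ C = 0 := by
    simp only [S, Set.mem_insert_iff, Set.mem_singleton_iff]
    rintro B (rfl | rfl | rfl) C (rfl | rfl | rfl) hne <;>
      first | exact absurd rfl hne | assumption | rwa [hadamard_comm]
  have hne : ∀ B ∈ S, ∀ B', B ⊙ B' = 0 → B ≠ B' := fun B hB _ =>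
    IsZeroOne.ne_of_hadamard_eq_zero (h01 B hB) (by rintro rfl; simpa using hthree 0 hB)
  obtain ⟨C, hCS, hCsymm⟩ : ∃ C ∈ S, Cᵀ ≠ C := by
    contrapose! hnonsym
    exact ⟨hnonsym A₁ hmem₁, hnonsym A₂ hmem₂, hnonsym A₃ hmem₃⟩
  have hC := IsZeroOne.eq_cycleMatrix_or_transpose (h01 C hCS) (hnorm C hCS) (hthree C hCS) hCsymm
  have hsub : S ⊆ {1, cycleMatrix, cycleMatrixᵀ} := by
    intro B hB
    by_cases hBC : B = C
    · rcases hC with h | h <;> simp [hBC, h]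
    · rcases IsZeroOne.eq_one_or_transpose_of_hadamard_eq_zero hC (h01 B hB) (hnorm B hB)
        (hthree B hB) (hdisj B hB C hCS hBC) with h | h
      · simp [h]
      · rcases hC with rfl | rfl <;> simp [h]
  refine ⟨1, ?_⟩
  simp only [Equiv.Perm.coe_one, submatrix_id_id]
  exact Set.eq_of_subset_of_pairwise_ne (hne A₁ hmem₁ _ h₁₂) (hne A₁ hmem₁ _ h₁₃)
    (hne A₂ hmem₂ _ h₂₃) hsub
end
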